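/- arXiv:2202.02011 — 8 statements merged into one kernel-verified Lean document; each statement's English description precedes it below -/
import Mathlib

section
/- For any x ≥ 0 and any natural number m, the tail of the exponential series satisfies ∑_{n=m}^∞ xⁿ/n! ≤ e^{e·x - m}. -/
/-! Compare the tail termwise with the full series of `exp (e * x)`: for `n ≥ m`,
`xⁿ = e^{-n} (e x)ⁿ ≤ e^{-m} (e x)ⁿ`, so the tail is at most `e^{-m} · exp (e x)`. -/

open Real Nat

lemma Real.hasSum_pow_div_factorial (x : ℝ) : HasSum (fun n ↦ x ^ n / n !) (exp x) :=
  Real.exp_eq_exp_ℝ ▸ NormedSpace.expSeries_div_hasSum_exp x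

lemma pow_le_exp_neg_mul_exp_one_mul_pow {x : ℝ} (hx : 0 ≤ x) {m n : ℕ} (hmn : m ≤ n) :
    x ^ n ≤ exp (-m) * (exp 1 * x) ^ n := by
  have hexp : 1 ≤ exp (-m) * exp 1 ^ n := by
    rw [← Real.exp_nat_mul, ← Real.exp_add, Real.one_le_exp_iff, mul_one]
    have : (m : ℝ) ≤ n := by exact_mod_cast hmn
    linarith
  calc x ^ n = 1 * x ^ n := (one_mul _).symm
    _ ≤ exp (-m) * exp 1 ^ n * x ^ n := by gcongr
    _ = exp (-m) * (exp 1 * x) ^ n := by ring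

lemma tsum_nat_add_le_tsum {f : ℕ → ℝ} (hf : Summable f) (hf₀ : ∀ n, 0 ≤ f n) (m : ℕ) :
    ∑' n, f (n + m) ≤ ∑' n, f n :=
  tsum_comp_le_tsum_of_inj hf hf₀ (add_left_injective m)

/-- For `x ≥ 0` and `m : ℕ`, the tail of the exponential series satisfies
`∑_{n=m}^∞ xⁿ/n! ≤ e^{e·x − m}`. -/
theorem exp_series_tail_bound (x : ℝ) (hx : 0 ≤ x) (m : ℕ) :
    ∑' n : ℕ, x ^ (n + m) / (n + m).factorial ≤
      Real.exp (Real.exp 1 * x - m) := by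
  set g : ℕ → ℝ := fun k ↦ ((exp 1 * x) ^ k / k !)
  have hg : HasSum g (exp (exp 1 * x)) := Real.hasSum_pow_div_factorial _
  have hg₀ (k : ℕ) : 0 ≤ g k := by positivity
  have hg_tail : Summable fun n ↦ g (n + m) := (summable_nat_add_iff m).mpr hg.summable
  calc ∑' n, x ^ (n + m) / (n + m)!
      ≤ ∑' n, exp (-m) * g (n + m) := by
        refine Summable.tsum_le_tsum (fun n ↦ ?_) ?_ (hg_tail.mul_left _)
        · rw [← mul_div_assoc]
          gcongr
          exact pow_le_exp_neg_mul_exp_one_mul_pow hx (Nat.le_add_left m n)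
        · exact (summable_nat_add_iff m).mpr (Real.hasSum_pow_div_factorial x).summable
    _ = exp (-m) * ∑' n, g (n + m) := tsum_mul_left
    _ ≤ exp (-m) * exp (exp 1 * x) := by
        gcongr
        exact hg.tsum_eq ▸ tsum_nat_add_le_tsum hg.summable hg₀ m
    _ = exp (exp 1 * x - m) := by rw [← Real.exp_add]; ring_nf
end

section
/- For anti-Hermitian matrices A and B and any real x ≥ 0, one has ‖e^{x(A+B)} − e^{xA}e^{xB}‖ ≤ (x²/2)·‖[A,B]‖ (first-order Trotter error bound). -/
/-!
Both estimates are instances of one variation-of-constants bound: if `F' = c F + R` on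
`[0, x]` and `exp (t • c)` is a contraction for `t ≥ 0`, then
`G s = exp ((x - s) • c) * F s` has `G' s = exp ((x - s) • c) * R s`, so
`‖F x - exp (x • c) * F 0‖` is at most the integral of any bound on `‖R‖`.
For `F s = exp (s • a) * b - b * exp (s • a)` the remainder is `[a, b] * exp (s • a)`, which gives
`‖[exp (t • a), b]‖ ≤ t ‖[a, b]‖`; for `F s = exp (s • a) * exp (s • b)` and `c = a + b` the
remainder is `[exp (s • a), b] * exp (s • b)`, of norm at most `s ‖[a, b]‖`, whose integral
is `x² / 2 ‖[a, b]‖`. Exponentials of skew-adjoint elements of a C⋆-algebra are unitary, hence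
contractions.
-/

open NormedSpace Set

section ContractionGenerator

variable {𝔸 : Type*} [NormedRing 𝔸] [NormedAlgebra ℝ 𝔸] [CompleteSpace 𝔸]

def IsContractionGenerator (a : 𝔸) : Prop :=
  ∀ t : ℝ, 0 ≤ t → ‖exp (t • a)‖ ≤ 1

lemma hasDerivAt_exp_smul_const_sub (a : 𝔸) (x s : ℝ) :
    HasDerivAt (fun u : ℝ => exp ((x - u) • a)) (-(a * exp ((x - s) • a))) s := by
  have h := (hasDerivAt_exp_smul_const' (𝕂 := ℝ) a (x - s)).scomp s
    ((hasDerivAt_id s).const_sub x)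
  rw [neg_one_smul] at h
  exact h

theorem norm_sub_exp_smul_mul_le {c : 𝔸} (hc : IsContractionGenerator c) {F R : ℝ → 𝔸}
    {P ρ : ℝ → ℝ} {x : ℝ} (hx : 0 ≤ x) (hF : ∀ s ∈ Icc 0 x, HasDerivAt F (c * F s + R s) s)
    (hR : ∀ s ∈ Ico 0 x, ‖R s‖ ≤ ρ s) (hP : ∀ s, HasDerivAt P (ρ s) s) (hP0 : P 0 = 0) :
    ‖F x - exp (x • c) * F 0‖ ≤ P x := by
  set G : ℝ → 𝔸 := fun s => exp ((x - s) • c) * F s - exp (x • c) * F 0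
  have hG : ∀ s ∈ Icc 0 x, HasDerivAt G (exp ((x - s) • c) * R s) s := by
    intro s hs
    refine (((hasDerivAt_exp_smul_const_sub c x s).mul (hF s hs)).sub_const
      (exp (x • c) * F 0)).congr_deriv ?_
    have hcomm : Commute c (exp ((x - s) • c)) := ((Commute.refl c).smul_right _).exp_right
    simp only [neg_mul, mul_add, ← mul_assoc, hcomm.eq]
    abel
  have hG' : ∀ s ∈ Ico 0 x, ‖exp ((x - s) • c) * R s‖ ≤ ρ s := fun s hs =>
    calc ‖exp ((x - s) • c) * R s‖ ≤ ‖exp ((x - s) • c)‖ * ‖R s‖ := norm_mul_le _ _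
      _ ≤ 1 * ρ s := mul_le_mul (hc _ (by linarith [hs.2])) (hR s hs) (norm_nonneg _) zero_le_one
      _ = ρ s := one_mul _
  have hGx := image_norm_le_of_norm_deriv_right_le_deriv_boundary
    (fun s hs => (hG s hs).continuousAt.continuousWithinAt)
    (fun s hs => (hG s (Ico_subset_Icc_self hs)).hasDerivWithinAt) (by simp [G, hP0]) hP hG'
    (right_mem_Icc.2 hx)
  simpa [G] using hGx

theorem norm_exp_smul_mul_sub_mul_exp_smul_le {a : 𝔸} (ha : IsContractionGenerator a) (b : 𝔸)
    {t : ℝ} (ht : 0 ≤ t) :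
    ‖exp (t • a) * b - b * exp (t • a)‖ ≤ t * ‖a * b - b * a‖ := by
  have hF : ∀ s : ℝ, HasDerivAt (fun s : ℝ => exp (s • a) * b - b * exp (s • a))
      (a * (exp (s • a) * b - b * exp (s • a)) + (a * b - b * a) * exp (s • a)) s := by
    intro s
    refine (((hasDerivAt_exp_smul_const' (𝕂 := ℝ) a s).mul_const b).sub
      ((hasDerivAt_exp_smul_const' (𝕂 := ℝ) a s).const_mul b)).congr_deriv ?_
    noncomm_ring
  have hR : ∀ s ∈ Ico 0 t, ‖(a * b - b * a) * exp (s • a)‖ ≤ ‖a * b - b * a‖ := fun s hs =>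
    (norm_mul_le _ _).trans (mul_le_of_le_one_right (norm_nonneg _) (ha s hs.1))
  have hP : ∀ s : ℝ, HasDerivAt (fun s : ℝ => s * ‖a * b - b * a‖) ‖a * b - b * a‖ s :=
    fun s => by simpa using (hasDerivAt_id s).mul_const ‖a * b - b * a‖
  simpa using norm_sub_exp_smul_mul_le ha ht (fun s _ => hF s) hR hP (zero_mul _)

theorem norm_exp_smul_add_sub_exp_smul_mul_exp_smul_le {a b : 𝔸} (ha : IsContractionGenerator a)
    (hb : IsContractionGenerator b) (hab : IsContractionGenerator (a + b)) {x : ℝ} (hx : 0 ≤ x) :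
    ‖exp (x • (a + b)) - exp (x • a) * exp (x • b)‖ ≤ x ^ 2 / 2 * ‖a * b - b * a‖ := by
  set K := ‖a * b - b * a‖
  have hF : ∀ s : ℝ, HasDerivAt (fun s : ℝ => exp (s • a) * exp (s • b))
      ((a + b) * (exp (s • a) * exp (s • b)) +
        (exp (s • a) * b - b * exp (s • a)) * exp (s • b)) s := by
    intro s
    refine ((hasDerivAt_exp_smul_const' (𝕂 := ℝ) a s).mul
      (hasDerivAt_exp_smul_const' (𝕂 := ℝ) b s)).congr_deriv ?_
    noncomm_ring
  have hR : ∀ s ∈ Ico 0 x, ‖(exp (s • a) * b - b * exp (s • a)) * exp (s • b)‖ ≤ s * K :=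
    fun s hs => (norm_mul_le _ _).trans <|
      (mul_le_of_le_one_right (norm_nonneg _) (hb s hs.1)).trans
        (norm_exp_smul_mul_sub_mul_exp_smul_le ha b hs.1)
  have hP : ∀ s : ℝ, HasDerivAt (fun s : ℝ => s ^ 2 / 2 * K) (s * K) s := fun s => by
    refine (((hasDerivAt_pow 2 s).div_const 2).mul_const K).congr_deriv ?_
    norm_num
  rw [norm_sub_rev]
  simpa using norm_sub_exp_smul_mul_le hab hx (fun s _ => hF s) hR hP (by simp)

theorem IsContractionGenerator.of_mem_skewAdjoint [StarRing 𝔸] [CStarRing 𝔸] [StarModule ℝ 𝔸]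
    {a : 𝔸} (ha : a ∈ skewAdjoint 𝔸) : IsContractionGenerator a := by
  intro t _
  nontriviality 𝔸
  -- `exp` does not depend on the choice of `ℚ`-algebra structure; the library lemma needs one.
  let _ : NormedAlgebra ℚ 𝔸 := NormedAlgebra.restrictScalars ℚ ℝ 𝔸
  exact (CStarRing.norm_of_mem_unitary
    (exp_mem_unitary_of_mem_skewAdjoint (skewAdjoint.smul_mem t ha))).le

end ContractionGenerator

open Matrix
open scoped Matrix.Norms.L2Operator

/-- First-order Trotter error bound: for anti-Hermitian matrices `A`, `B` and
`x ≥ 0`, `‖e^{x(A+B)} − e^{xA}e^{xB}‖ ≤ (x²/2)·‖[A,B]‖`. -/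
theorem trotter_first_order_bound (n : ℕ) (A B : Matrix (Fin n) (Fin n) ℂ)
    (hA : Aᴴ = -A) (hB : Bᴴ = -B) (x : ℝ) (hx : 0 ≤ x) :
    ‖NormedSpace.exp ((x : ℂ) • (A + B)) -
        NormedSpace.exp ((x : ℂ) • A) * NormedSpace.exp ((x : ℂ) • B)‖ ≤
      x ^ 2 / 2 * ‖A * B - B * A‖ := by
  have hA' : A ∈ skewAdjoint (Matrix (Fin n) (Fin n) ℂ) := skewAdjoint.mem_iff.2 hA
  have hB' : B ∈ skewAdjoint (Matrix (Fin n) (Fin n) ℂ) := skewAdjoint.mem_iff.2 hB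
  simp only [Complex.coe_smul]
  exact norm_exp_smul_add_sub_exp_smul_mul_exp_smul_le (.of_mem_skewAdjoint hA')
    (.of_mem_skewAdjoint hB') (.of_mem_skewAdjoint (add_mem hA' hB')) hx
end

section
/- For α > 1, there is a constant p (one may take p = 2^{α+1}(2ζ(α)−1)) such that for all integers j₁, j₂, ∑_{j∈ℤ} (1+|j₁−j|)^{−α} (1+|j−j₂|)^{−α} ≤ p·(1+|j₁−j₂|)^{−α}. -/
/-!
Write `f n = (1 + |n|)^(-α)`. By the triangle inequality, for `a + b = n` one of `|a|`, `|b|` is at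
least `|n| / 2`, so the corresponding factor is at most `2^α f n` while the other is kept; hence
`f a * f b ≤ 2^α f n (f a + f b)`. Summing over the splittings `a = j₁ - j`, `b = j - j₂` of
`n = j₁ - j₂` bounds the convolution by `2^α (2 ∑ f) f n`, and `∑ f = 2ζ(α) - 1` is finite for `α > 1`.
-/

open Real

noncomputable def powerDecay (α : ℝ) (n : ℤ) : ℝ := ((1 + |n| : ℤ) : ℝ) ^ (-α)

namespace powerDecay

variable {α : ℝ}

theorem pos (α : ℝ) (n : ℤ) : 0 < powerDecay α n := by
  unfold powerDecay
  positivity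

theorem summable (hα : 1 < α) : Summable (powerDecay α) := by
  refine (summable_abs_int_rpow hα).of_norm_bounded_eventually ?_
  filter_upwards [Filter.eventually_cofinite_ne 0] with n hn
  rw [Real.norm_of_nonneg (pos α n).le, powerDecay]
  push_cast
  exact rpow_le_rpow_of_nonpos (by positivity) (by linarith) (by linarith)

theorem le_two_rpow_mul_of_le_two_mul (hα : 0 ≤ α) {m n : ℤ} (h : |n| ≤ 2 * |m|) :
    powerDecay α m ≤ 2 ^ α * powerDecay α n := by
  have hle : 2⁻¹ * (1 + |(n : ℝ)|) ≤ 1 + |(m : ℝ)| := by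
    have : |(n : ℝ)| ≤ 2 * |(m : ℝ)| := by exact_mod_cast h
    linarith
  calc powerDecay α m
      ≤ (2⁻¹ * (1 + |(n : ℝ)|)) ^ (-α) := by
        rw [powerDecay]
        push_cast
        exact rpow_le_rpow_of_nonpos (by positivity) hle (neg_nonpos.mpr hα)
    _ = 2 ^ α * powerDecay α n := by
        rw [mul_rpow (by norm_num) (by positivity), inv_rpow (by norm_num), rpow_neg (by norm_num),
          inv_inv, powerDecay]
        push_cast
        rfl

theorem mul_le (hα : 0 ≤ α) (a b : ℤ) :
    powerDecay α a * powerDecay α b ≤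
      2 ^ α * powerDecay α (a + b) * (powerDecay α a + powerDecay α b) := by
  have ha := pos α a
  have hb := pos α b
  have htri : |a + b| ≤ |a| + |b| := abs_add_le a b
  rcases le_total (|a + b|) (2 * |a|) with h | h
  · have := le_two_rpow_mul_of_le_two_mul hα h
    nlinarith
  · have := le_two_rpow_mul_of_le_two_mul hα (m := b) (n := a + b) (by omega)
    nlinarith

theorem tsum_mul_le (hα : 1 < α) (j₁ j₂ : ℤ) :
    ∑' j, powerDecay α (j₁ - j) * powerDecay α (j - j₂) ≤
      2 ^ α * (2 * ∑' n, powerDecay α n) * powerDecay α (j₁ - j₂) := by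
  have hS := summable hα
  have hleft : Summable fun j ↦ powerDecay α (j₁ - j) := (Equiv.subLeft j₁).summable_iff (f := powerDecay α) |>.mpr hS
  have hright : Summable fun j ↦ powerDecay α (j - j₂) := (Equiv.subRight j₂).summable_iff (f := powerDecay α) |>.mpr hS
  have hpoint : ∀ j, powerDecay α (j₁ - j) * powerDecay α (j - j₂) ≤
      2 ^ α * powerDecay α (j₁ - j₂) * (powerDecay α (j₁ - j) + powerDecay α (j - j₂)) := by
    intro j
    have := mul_le (by linarith) (j₁ - j) (j - j₂)
    rwa [sub_add_sub_cancel] at this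
  have hbound := (hleft.add hright).mul_left (2 ^ α * powerDecay α (j₁ - j₂))
  calc ∑' j, powerDecay α (j₁ - j) * powerDecay α (j - j₂)
      ≤ ∑' j, 2 ^ α * powerDecay α (j₁ - j₂) * (powerDecay α (j₁ - j) + powerDecay α (j - j₂)) :=
        (hbound.of_nonneg_of_le (fun j ↦ (mul_pos (pos α _) (pos α _)).le) hpoint).tsum_le_tsum
          hpoint hbound
    _ = 2 ^ α * (2 * ∑' n, powerDecay α n) * powerDecay α (j₁ - j₂) := by
        have hleft_tsum : ∑' j, powerDecay α (j₁ - j) = ∑' n, powerDecay α n :=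
          (Equiv.subLeft j₁).tsum_eq _
        have hright_tsum : ∑' j, powerDecay α (j - j₂) = ∑' n, powerDecay α n :=
          (Equiv.subRight j₂).tsum_eq _
        rw [tsum_mul_left, hleft.tsum_add hright, hleft_tsum, hright_tsum]
        ring

end powerDecay

/-- Reproducing (convolution) property of power-law decay: for `α > 1` there is
a constant `p` such that for all integers `j₁, j₂`,
`∑_{j∈ℤ} (1+|j₁−j|)^{−α} (1+|j−j₂|)^{−α} ≤ p (1+|j₁−j₂|)^{−α}`. -/
theorem powerLaw_convolution_bound (α : ℝ) (hα : 1 < α) :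
    ∃ p : ℝ, ∀ j₁ j₂ : ℤ,
      (∑' j : ℤ, ((1 + |j₁ - j| : ℤ) : ℝ) ^ (-α) * ((1 + |j - j₂| : ℤ) : ℝ) ^ (-α)) ≤
        p * ((1 + |j₁ - j₂| : ℤ) : ℝ) ^ (-α) :=
  ⟨_, powerDecay.tsum_mul_le hα⟩
end

section
/- For finitely many positive probabilities p_i depending smoothly on time and summing to 1, the total variation distance satisfies 2·d(p(0), p(τ)) ≤ ∫₀^τ √(∑_i (dp_i/dt)²/p_i(t)) dt, i.e., the classical speed limit bound τ ≥ 2 d(p(0),p(τ)) / (time-averaged √Fisher information). -/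
/-!
Each `p i` is the integral of its derivative, so the total variation distance travelled is at most
`∫ ∑ᵢ |ṗᵢ|`; pointwise in time, Cauchy–Schwarz with weights `pᵢ` (which sum to `1`) bounds
`∑ᵢ |ṗᵢ|` by the square root of the Fisher information `∑ᵢ ṗᵢ² / pᵢ`.
-/

open Finset intervalIntegral

theorem sum_abs_le_sqrt_sum_sq_div {ι : Type*} [Fintype ι] (v w : ι → ℝ)
    (hw : ∀ i, 0 < w i) (hw_sum : ∑ i, w i = 1) :
    ∑ i, |v i| ≤ √(∑ i, v i ^ 2 / w i) := by
  apply Real.le_sqrt_of_sq_le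
  simpa only [hw_sum, div_one, sq_abs] using
    sq_sum_div_le_sum_sq_div univ (fun i => |v i|) fun i _ => hw i

theorem abs_sub_le_integral_abs_of_hasDerivAt {f f' : ℝ → ℝ} {a b : ℝ} (hab : a ≤ b)
    (hf : ∀ t ∈ Set.uIcc a b, HasDerivAt f (f' t) t)
    (hf' : IntervalIntegrable f' MeasureTheory.volume a b) :
    |f b - f a| ≤ ∫ t in a..b, |f' t| := by
  rw [← integral_eq_sub_of_hasDerivAt hf hf']
  exact abs_integral_le_integral_abs hab

/-- Classical speed limit: for a smooth curve `p(t)` of positive probability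
distributions on a finite set, the total variation distance satisfies
`2 d(p(0), p(τ)) ≤ ∫₀^τ √(∑ᵢ (dpᵢ/dt)²/pᵢ) dt`. -/
theorem classical_speed_limit_total_variation (N : ℕ)
    (p p' : ℝ → Fin N → ℝ) (τ : ℝ) (hτ : 0 ≤ τ)
    (hderiv : ∀ i t, HasDerivAt (fun s => p s i) (p' t i) t)
    (hcont : ∀ i, Continuous fun t => p' t i)
    (hpos : ∀ t i, 0 < p t i)
    (hsum : ∀ t, ∑ i, p t i = 1) :
    2 * ((1 / 2) * ∑ i, |p 0 i - p τ i|) ≤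
      ∫ t in (0 : ℝ)..τ, Real.sqrt (∑ i, (p' t i) ^ 2 / p t i) := by
  have hp : ∀ i, Continuous fun t => p t i := fun i =>
    continuous_iff_continuousAt.2 fun t => (hderiv i t).continuousAt
  have hfisher : Continuous fun t => √(∑ i, p' t i ^ 2 / p t i) :=
    (continuous_finsetSum _ fun i _ =>
      ((hcont i).pow 2).div (hp i) fun t => (hpos t i).ne').sqrt
  calc 2 * ((1 / 2) * ∑ i, |p 0 i - p τ i|) = ∑ i, |p τ i - p 0 i| := by
        simp only [← mul_assoc, abs_sub_comm (p 0 _)]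
        norm_num
    _ ≤ ∑ i, ∫ t in (0 : ℝ)..τ, |p' t i| := sum_le_sum fun i _ =>
        abs_sub_le_integral_abs_of_hasDerivAt hτ (fun t _ => hderiv i t)
          ((hcont i).intervalIntegrable _ _)
    _ = ∫ t in (0 : ℝ)..τ, ∑ i, |p' t i| :=
        (integral_finsetSum fun i _ => (hcont i).abs.intervalIntegrable _ _).symm
    _ ≤ ∫ t in (0 : ℝ)..τ, √(∑ i, p' t i ^ 2 / p t i) :=
        integral_mono_on hτ
          ((continuous_finsetSum _ fun i _ => (hcont i).abs).intervalIntegrable _ _)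
          (hfisher.intervalIntegrable _ _) fun t _ =>
            sum_abs_le_sqrt_sum_sq_div _ _ (hpos t) (hsum t)
end

section
/- For a time-dependent probability distribution (p_i(t)) on a finite set and a fixed observable A = (a_i), the speed of the expectation value satisfies |d⟨A⟩/dt| ≤ σ_A · √F_c, where σ_A is the standard deviation of A under p(t) and F_c = ∑_i p_i (d ln p_i/dt)² is the classical Fisher information (Cramér-Rao type speed limit). -/
/-!
Since `∑ pᵢ ≡ 1`, the velocities satisfy `∑ ṗᵢ = 0`, so `d⟨A⟩/dt = ∑ (aᵢ - ⟨A⟩) ṗᵢ`.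
Writing each term as `((aᵢ - ⟨A⟩) √pᵢ) · (ṗᵢ / √pᵢ)`, Cauchy–Schwarz bounds it by
`√(∑ pᵢ (aᵢ - ⟨A⟩)²) · √(∑ ṗᵢ² / pᵢ) = σ_A √F_c`.
-/

open Finset

variable {ι : Type*}

lemma Finset.sum_hasDerivAt_eq_zero_of_sum_const (s : Finset ι) {p : ℝ → ι → ℝ}
    {p' : ι → ℝ} {t c : ℝ} (hderiv : ∀ i ∈ s, HasDerivAt (fun u => p u i) (p' i) t)
    (hconst : ∀ u, ∑ i ∈ s, p u i = c) : ∑ i ∈ s, p' i = 0 := by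
  have hsum : HasDerivAt (fun u => ∑ i ∈ s, p u i) (∑ i ∈ s, p' i) t :=
    HasDerivAt.fun_sum hderiv
  simp only [hconst] at hsum
  exact hsum.unique (hasDerivAt_const t c)

lemma Finset.sum_mul_eq_sum_sub_mul_of_sum_eq_zero {R : Type*} [CommRing R] (s : Finset ι)
    (a q : ι → R) (c : R) (hq : ∑ i ∈ s, q i = 0) :
    ∑ i ∈ s, a i * q i = ∑ i ∈ s, (a i - c) * q i := by
  simp only [sub_mul, sum_sub_distrib, ← mul_sum, hq, mul_zero, sub_zero]

lemma Finset.sum_mul_sub_sq_eq {R : Type*} [CommRing R] (s : Finset ι) (p a : ι → R)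
    (hp : ∑ i ∈ s, p i = 1) :
    ∑ i ∈ s, p i * (a i - ∑ j ∈ s, p j * a j) ^ 2 =
      ∑ i ∈ s, p i * a i ^ 2 - (∑ i ∈ s, p i * a i) ^ 2 := by
  set m := ∑ j ∈ s, p j * a j
  have hexpand : ∀ i, p i * (a i - m) ^ 2 = p i * a i ^ 2 - 2 * m * (p i * a i) + m ^ 2 * p i :=
    fun i => by ring
  simp only [hexpand, sum_add_distrib, sum_sub_distrib, ← mul_sum, hp]
  ring

lemma Finset.sq_sum_mul_le_sum_mul_sq_mul_sum_sq_div {R : Type*} [Field R] [LinearOrder R]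
    [IsStrictOrderedRing R] (s : Finset ι) (x y : ι → R) {w : ι → R}
    (hw : ∀ i ∈ s, 0 < w i) :
    (∑ i ∈ s, x i * y i) ^ 2 ≤ (∑ i ∈ s, w i * x i ^ 2) * ∑ i ∈ s, y i ^ 2 / w i := by
  refine sum_sq_le_sum_mul_sum_of_sq_le_mul s (fun i hi => by have := hw i hi; positivity)
    (fun i hi => by have := hw i hi; positivity) fun i hi => le_of_eq ?_
  field_simp [(hw i hi).ne']

lemma Finset.abs_sum_mul_le_sqrt_mul_sqrt (s : Finset ι) (x y : ι → ℝ) {w : ι → ℝ}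
    (hw : ∀ i ∈ s, 0 < w i) :
    |∑ i ∈ s, x i * y i| ≤ √(∑ i ∈ s, w i * x i ^ 2) * √(∑ i ∈ s, y i ^ 2 / w i) := by
  have hnonneg : 0 ≤ ∑ i ∈ s, w i * x i ^ 2 :=
    sum_nonneg fun i hi => mul_nonneg (hw i hi).le (sq_nonneg _)
  rw [← Real.sqrt_mul hnonneg]
  exact Real.abs_le_sqrt (s.sq_sum_mul_le_sum_mul_sq_mul_sum_sq_div x y hw)

/-- Cramér–Rao type classical speed limit: for a time-dependent probability
distribution `p(t)` on a finite set and a fixed observable `A = (aᵢ)`,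
`|d⟨A⟩/dt| ≤ σ_A √F_c`, with `σ_A` the standard deviation of `A` under `p(t)`
and `F_c = ∑ᵢ (dpᵢ/dt)²/pᵢ` the classical Fisher information. -/
theorem classical_cramer_rao_speed_limit (N : ℕ)
    (p p' : ℝ → Fin N → ℝ) (a : Fin N → ℝ) (t : ℝ)
    (hderiv : ∀ i s, HasDerivAt (fun u => p u i) (p' s i) s)
    (hpos : ∀ s i, 0 < p s i)
    (hsum : ∀ s, ∑ i, p s i = 1) :
    |∑ i, a i * p' t i| ≤
      Real.sqrt ((∑ i, p t i * (a i) ^ 2) - (∑ i, p t i * a i) ^ 2) *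
        Real.sqrt (∑ i, (p' t i) ^ 2 / p t i) := by
  have hvel : ∑ i, p' t i = 0 :=
    univ.sum_hasDerivAt_eq_zero_of_sum_const (fun i _ => hderiv i t) hsum
  rw [univ.sum_mul_eq_sum_sub_mul_of_sum_eq_zero _ _ (∑ j, p t j * a j) hvel,
    ← univ.sum_mul_sub_sq_eq (p t) a (hsum t)]
  exact univ.abs_sum_mul_le_sqrt_mul_sqrt _ _ fun i _ => hpos t i
end

section
/- For a Markov chain satisfying detailed balance with rates W_{ij} ≥ 0 for i≠j and current distribution p, the total probability speed obeys ∑_i |∑_j W_{ij} p_j| ≤ √(2·A·Σ̇), where A = ∑_{i≠j} W_{ij} p_j is the dynamical activity and Σ̇ = (1/2)∑_{i≠j} (W_{ij}p_j − W_{ji}p_i)·ln(W_{ij}p_j/(W_{ji}p_i)) is the entropy production rate. -/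
/-! For each ordered pair of states put `a = Wᵢⱼpⱼ` and `b = Wⱼᵢpᵢ`; then `ṗᵢ` is the sum of the
currents `a - b` into `i`. The logarithmic mean is at most the arithmetic mean,
`(a - b) / log (a / b) ≤ (a + b) / 2`, which gives `|a - b| ≤ √(a + b) · √((a - b) log (a / b) / 2)`,
and Cauchy–Schwarz over all pairs yields `√(2A · Σ̇)` because `∑ (a + b) = 2A`. -/

open Finset Real

namespace Real

/-- `log t` is the sum of the series `2 ∑ₖ ((t - 1) / (t + 1))^(2k+1) / (2k + 1)`, all of whose
terms are nonnegative; this is its first term. -/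
theorem two_mul_sub_one_div_add_one_le_log {t : ℝ} (ht : 1 ≤ t) :
    2 * (t - 1) / (t + 1) ≤ log t := by
  rcases ht.eq_or_lt with rfl | ht
  · simp
  have hseries := hasSum_log_one_add_inv (inv_pos.mpr (sub_pos.mpr ht))
  rw [inv_inv, add_sub_cancel] at hseries
  refine le_trans (le_of_eq ?_) (le_hasSum hseries 0 fun k _ => by positivity)
  have : t - 1 ≠ 0 := (sub_pos.mpr ht).ne'
  simp only [Nat.cast_zero, mul_zero, zero_add, pow_one]
  field_simp
  ring

theorem two_mul_sq_sub_le_add_mul_sub_mul_log {a b : ℝ} (ha : 0 < a) (hb : 0 < b) :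
    2 * (a - b) ^ 2 ≤ (a + b) * ((a - b) * log (a / b)) := by
  wlog hba : b ≤ a generalizing a b
  · have h := this hb ha (le_of_not_ge hba)
    rw [← inv_div, log_inv]
    linarith
  obtain ⟨t, rfl⟩ : ∃ t, a = t * b := ⟨a / b, by field_simp⟩
  have ht : 1 ≤ t := by nlinarith
  have hlog := two_mul_sub_one_div_add_one_le_log ht
  rw [div_le_iff₀ (by positivity)] at hlog
  have key : 0 ≤ b ^ 2 * (t - 1) * (log t * (t + 1) - 2 * (t - 1)) := by
    have := sub_nonneg.mpr hlog
    have := sub_nonneg.mpr ht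
    positivity
  rw [mul_div_cancel_right₀ t hb.ne']
  linear_combination key

theorem abs_sub_le_sqrt_add_mul_sqrt_half_sub_mul_log {a b : ℝ} (ha : 0 < a) (hb : 0 < b) :
    |a - b| ≤ √(a + b) * √((1 / 2) * ((a - b) * log (a / b))) := by
  rw [← sqrt_mul (by positivity), ← sqrt_sq_eq_abs]
  refine sqrt_le_sqrt ?_
  linarith [two_mul_sq_sub_le_add_mul_sub_mul_log ha hb]

theorem sub_mul_log_div_nonneg {a b : ℝ} (ha : 0 < a) (hb : 0 < b) :
    0 ≤ (a - b) * log (a / b) :=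
  nonneg_of_mul_nonneg_right ((two_mul_sq_sub_le_add_mul_sub_mul_log ha hb).trans' (by positivity))
    (by positivity)

theorem sum_abs_sub_le_sqrt_sum_add_mul_half_sum_sub_mul_log {κ : Type*} (s : Finset κ)
    {a b : κ → ℝ} (ha : ∀ q ∈ s, 0 < a q) (hb : ∀ q ∈ s, 0 < b q) :
    ∑ q ∈ s, |a q - b q| ≤
      √((∑ q ∈ s, (a q + b q)) * ((1 / 2) * ∑ q ∈ s, (a q - b q) * log (a q / b q))) := by
  calc ∑ q ∈ s, |a q - b q|
      ≤ ∑ q ∈ s, √(a q + b q) * √((1 / 2) * ((a q - b q) * log (a q / b q))) :=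
        sum_le_sum fun q hq => abs_sub_le_sqrt_add_mul_sqrt_half_sub_mul_log (ha q hq) (hb q hq)
    _ ≤ √(∑ q ∈ s, √(a q + b q) ^ 2) *
          √(∑ q ∈ s, √((1 / 2) * ((a q - b q) * log (a q / b q))) ^ 2) :=
        sum_mul_le_sqrt_mul_sqrt _ _ _
    _ = _ := by
      rw [← sqrt_mul (sum_nonneg fun _ _ => sq_nonneg _), mul_sum (a := 1 / 2)]
      congr 2 <;> refine sum_congr rfl fun q hq => sq_sqrt ?_
      · exact (add_pos (ha q hq) (hb q hq)).le
      · exact mul_nonneg (by norm_num) (sub_mul_log_div_nonneg (ha q hq) (hb q hq))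

end Real

theorem Finset.sum_offDiag_eq_sum_sum_erase {α M : Type*} [DecidableEq α] [AddCommMonoid M]
    (s : Finset α) (f : α → α → M) :
    ∑ q ∈ s.offDiag, f q.1 q.2 = ∑ i ∈ s, ∑ j ∈ s.erase i, f i j :=
  sum_finset_product' _ _ _ fun q => by rw [mem_offDiag, mem_erase, ne_comm]; tauto

theorem Finset.sum_offDiag_swap {α M : Type*} [DecidableEq α] [AddCommMonoid M]
    (s : Finset α) (f : α → α → M) :
    ∑ q ∈ s.offDiag, f q.2 q.1 = ∑ q ∈ s.offDiag, f q.1 q.2 :=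
  sum_equiv (Equiv.prodComm α α)
    (fun q => by
      rw [mem_offDiag, mem_offDiag, Equiv.prodComm_apply, Prod.fst_swap, Prod.snd_swap, ne_comm]
      tauto)
    (by simp)

section MasterEquation

variable {ι : Type*} [Fintype ι] [DecidableEq ι]

theorem sum_mul_eq_sum_erase_sub_of_sum_eq_zero {W : ι → ι → ℝ} (hcons : ∀ j, ∑ i, W i j = 0)
    (p : ι → ℝ) (i : ι) :
    ∑ j, W i j * p j = ∑ j ∈ univ.erase i, (W i j * p j - W j i * p i) := by
  have hdiag : W i i = -∑ j ∈ univ.erase i, W j i := by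
    rw [eq_neg_iff_add_eq_zero, add_sum_erase _ (fun j => W j i) (mem_univ i), hcons]
  rw [sum_sub_distrib, ← sum_mul, ← add_sum_erase _ _ (mem_univ i), hdiag]
  ring

theorem sum_abs_sum_mul_le_sum_offDiag_abs_sub {W : ι → ι → ℝ} (hcons : ∀ j, ∑ i, W i j = 0)
    (p : ι → ℝ) :
    ∑ i, |∑ j, W i j * p j| ≤ ∑ q ∈ univ.offDiag, |W q.1 q.2 * p q.2 - W q.2 q.1 * p q.1| := by
  rw [sum_offDiag_eq_sum_sum_erase univ fun i j => |W i j * p j - W j i * p i|]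
  refine sum_le_sum fun i _ => ?_
  rw [sum_mul_eq_sum_erase_sub_of_sum_eq_zero hcons]
  exact abs_sum_le_sum_abs _ _

end MasterEquation

theorem markov_speed_limit_activity_entropy_general (ι : Type*) [Fintype ι] [DecidableEq ι]
    (W : ι → ι → ℝ) (p : ι → ℝ)
    (hW : ∀ i j, i ≠ j → 0 < W i j)
    (hcons : ∀ j, ∑ i, W i j = 0)
    (hp : ∀ i, 0 < p i) :
    ∑ i, |∑ j, W i j * p j| ≤
      Real.sqrt (2 * (∑ q ∈ Finset.univ.offDiag, W q.1 q.2 * p q.2) *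
        ((1 / 2) * ∑ q ∈ Finset.univ.offDiag,
          (W q.1 q.2 * p q.2 - W q.2 q.1 * p q.1) *
            Real.log (W q.1 q.2 * p q.2 / (W q.2 q.1 * p q.1)))) := by
  have hflux : ∀ q ∈ (univ : Finset ι).offDiag, 0 < W q.1 q.2 * p q.2 := fun q hq =>
    mul_pos (hW _ _ (mem_offDiag.mp hq).2.2) (hp _)
  have hactivity : ∑ q ∈ (univ : Finset ι).offDiag, (W q.1 q.2 * p q.2 + W q.2 q.1 * p q.1) =
      2 * ∑ q ∈ univ.offDiag, W q.1 q.2 * p q.2 := by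
    rw [sum_add_distrib, sum_offDiag_swap univ fun i j => W i j * p j, two_mul]
  calc ∑ i, |∑ j, W i j * p j|
      ≤ ∑ q ∈ univ.offDiag, |W q.1 q.2 * p q.2 - W q.2 q.1 * p q.1| :=
        sum_abs_sum_mul_le_sum_offDiag_abs_sub hcons p
    _ ≤ _ := by
        rw [← hactivity]
        exact sum_abs_sub_le_sqrt_sum_add_mul_half_sum_sub_mul_log _ hflux
          fun q hq => hflux q.swap (by simpa [mem_offDiag, ne_comm] using hq)

/-- Speed limit for classical Markov jump dynamics with detailed balance:
`∑ᵢ |ṗᵢ| ≤ √(2·A·Σ̇)`, where `A` is the dynamical activity and `Σ̇` the entropy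
production rate. -/
theorem markov_speed_limit_activity_entropy (ι : Type*) [Fintype ι] [DecidableEq ι]
    (W : ι → ι → ℝ) (p : ι → ℝ) (β : ℝ) (Energy : ι → ℝ)
    (hW : ∀ i j, i ≠ j → 0 < W i j)
    (hcons : ∀ j, ∑ i, W i j = 0)
    (hdb : ∀ i j, W i j * Real.exp (-β * Energy j) = W j i * Real.exp (-β * Energy i))
    (hp : ∀ i, 0 < p i) (hpsum : ∑ i, p i = 1) :
    ∑ i, |∑ j, W i j * p j| ≤
      Real.sqrt (2 * (∑ q ∈ Finset.univ.offDiag, W q.1 q.2 * p q.2) *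
        ((1 / 2) * ∑ q ∈ Finset.univ.offDiag,
          (W q.1 q.2 * p q.2 - W q.2 q.1 * p q.1) *
            Real.log (W q.1 q.2 * p q.2 / (W q.2 q.1 * p q.1)))) :=
  markov_speed_limit_activity_entropy_general ι W p hW hcons hp
end

section
/- For positive reals x and y, (x − y)² ≤ (1/2)(x² − y²)·ln(x/y). -/
open Real

/-- Only the first term of the series `log (1 + u) - log (1 - u) = ∑ 2 u ^ (2k+1) / (2k+1)` is
kept; after multiplying by `u` every term is an even power, hence nonnegative. -/
theorem two_mul_sq_le_mul_log_one_add_sub_log_one_sub {u : ℝ} (hu : |u| < 1) :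
    2 * u ^ 2 ≤ u * (log (1 + u) - log (1 - u)) := by
  have hsum := (hasSum_log_sub_log_of_abs_lt_one hu).mul_left u
  have hterm : ∀ k : ℕ, u * (2 * (1 / (2 * k + 1)) * u ^ (2 * k + 1)) =
      2 * (1 / (2 * k + 1)) * (u ^ (k + 1)) ^ 2 := fun k => by ring
  simp only [hterm] at hsum
  simpa using le_hasSum hsum 0 fun k _ => by positivity

theorem log_div_eq_log_one_add_sub_log_one_sub {x y : ℝ} (hx : 0 < x) (hy : 0 < y) :
    log (x / y) = log (1 + (x - y) / (x + y)) - log (1 - (x - y) / (x + y)) := by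
  have hplus : 1 + (x - y) / (x + y) = 2 * x / (x + y) := by field_simp; ring
  have hminus : 1 - (x - y) / (x + y) = 2 * y / (x + y) := by field_simp; ring
  rw [hplus, hminus, ← log_div (by positivity) (by positivity)]
  congr 1
  field_simp

/-- For positive reals `x`, `y`: `(x − y)² ≤ (1/2)(x² − y²)·ln(x/y)`. -/
theorem sq_sub_le_half_mul_log (x y : ℝ) (hx : 0 < x) (hy : 0 < y) :
    (x - y) ^ 2 ≤ (1 / 2) * (x ^ 2 - y ^ 2) * Real.log (x / y) := by
  set u := (x - y) / (x + y) with hu_def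
  have hxy : 0 < x + y := by positivity
  have hu : |u| < 1 := by
    rw [abs_lt, lt_div_iff₀ hxy, div_lt_iff₀ hxy]
    constructor <;> linarith
  have hkey := two_mul_sq_le_mul_log_one_add_sub_log_one_sub hu
  rw [← log_div_eq_log_one_add_sub_log_one_sub hx hy] at hkey
  calc (x - y) ^ 2 = (x + y) ^ 2 / 2 * (2 * u ^ 2) := by
        rw [hu_def]; field_simp
    _ ≤ (x + y) ^ 2 / 2 * (u * log (x / y)) := by gcongr
    _ = (1 / 2) * (x ^ 2 - y ^ 2) * log (x / y) := by
        rw [hu_def]; field_simp; ring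
end

section
/- Let H be a self-adjoint operator on a finite-dimensional Hilbert space with ground-state energy E₀, and let Φ be self-adjoint. Then for the ground state |0⟩ and all t ≥ 0, |⟨0|Φ(t)Φ(0)|0⟩ − ⟨0|Φ(0)²|0⟩| ≤ (t/2)·‖[Φ,[H,Φ]]‖, where Φ(t) = e^{iHt}Φe^{−iHt}. -/
/-!
With `φ = Φ ψ₀`, the ground state is also a left eigenvector of `e^{iHt}`, so the correlator
difference is `⟨φ| e^{iE₀t} e^{-iHt} - 1 |φ⟩`. In an eigenbasis of `H` this is a sum of
weights `|φ_k|²` times `e^{-i(μ_k - E₀)t} - 1`, each factor of modulus at most `(μ_k - E₀) t`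
because `E₀` is the bottom of the spectrum. Summing gives `t ⟨φ|H - E₀|φ⟩`, and expanding the
double commutator against `H ψ₀ = E₀ ψ₀` shows `⟨ψ₀|[Φ,[H,Φ]]|ψ₀⟩ = 2 ⟨φ|H - E₀|φ⟩`, which is at
most `‖[Φ,[H,Φ]]‖` by Cauchy–Schwarz.
-/

open Matrix
open scoped Matrix.Norms.L2Operator

namespace Matrix

variable {m n : Type*} [Fintype m] [Fintype n]

theorem star_dotProduct_mul_diagonal_mul_conjTranspose_mulVec [DecidableEq n]
    (U : Matrix m n ℂ) (d : n → ℂ) (v : m → ℂ) :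
    star v ⬝ᵥ (U * diagonal d * Uᴴ) *ᵥ v = ∑ k, d k * Complex.normSq ((Uᴴ *ᵥ v) k) := by
  rw [← mulVec_mulVec, ← mulVec_mulVec, dotProduct_mulVec, ← conjTranspose_conjTranspose U,
    ← star_mulVec, conjTranspose_conjTranspose]
  simp only [dotProduct, mulVec_diagonal, Pi.star_apply, Complex.normSq_eq_conj_mul_self]
  refine Finset.sum_congr rfl fun k _ => ?_
  rw [Complex.star_def]
  ring

theorem vecMul_exp_of_vecMul_eq_smul {𝕜 : Type*} [RCLike 𝕜] [DecidableEq n] {A : Matrix n n 𝕜}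
    {v : n → 𝕜} {a : 𝕜} (h : v ᵥ* A = a • v) :
    v ᵥ* NormedSpace.exp A = NormedSpace.exp a • v := by
  let L : Matrix n n 𝕜 →L[𝕜] (n → 𝕜) := LinearMap.toContinuousLinearMap
    { toFun := (v ᵥ* ·)
      map_add' := fun A B => vecMul_add A B v
      map_smul' := fun c M => vecMul_smul v c M }
  have hpow : ∀ k : ℕ, v ᵥ* A ^ k = a ^ k • v := by
    intro k
    induction k with
    | zero => simp
    | succ k ih => rw [pow_succ, ← vecMul_vecMul, ih, smul_vecMul, h, smul_smul, pow_succ]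
  have hL := (NormedSpace.exp_series_hasSum_exp' (𝕂 := 𝕜) A).map L L.continuous
  have hs := (NormedSpace.exp_series_hasSum_exp' (𝕂 := 𝕜) a).smul_const v
  refine hL.unique ?_
  convert hs using 1
  funext k
  simp only [Function.comp_apply, L, LinearMap.coe_toContinuousLinearMap', LinearMap.coe_mk,
    AddHom.coe_mk, vecMul_smul, hpow, smul_smul, smul_eq_mul]

section Hermitian

variable [DecidableEq n] {A : Matrix n n ℂ} (hA : A.IsHermitian)

theorem IsHermitian.exp_smul (c : ℂ) :
    NormedSpace.exp (c • A) = (hA.eigenvectorUnitary : Matrix n n ℂ) *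
      diagonal (fun k => Complex.exp (c * hA.eigenvalues k)) *
        (hA.eigenvectorUnitary : Matrix n n ℂ)ᴴ := by
  set U : Matrix n n ℂ := ↑hA.eigenvectorUnitary
  have hU : IsUnit U := (Unitary.toUnits hA.eigenvectorUnitary).isUnit
  have hUinv : U⁻¹ = Uᴴ := inv_eq_right_inv (mem_unitaryGroup_iff.mp hA.eigenvectorUnitary.2)
  have hcA : c • A = U * diagonal (fun k => c * hA.eigenvalues k) * U⁻¹ := by
    conv_lhs => rw [hA.spectral_theorem, Unitary.conjStarAlgAut_apply]
    rw [hUinv, ← star_eq_conjTranspose, ← Matrix.smul_mul, ← Matrix.mul_smul, ← diagonal_smul]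
    rfl
  rw [hcA, Matrix.exp_conj _ _ hU, Matrix.exp_diagonal, hUinv]
  congr 3
  funext k
  simp [← Complex.exp_eq_exp_ℂ]

theorem IsHermitian.star_dotProduct_mulVec_eq_sum (v : n → ℂ) :
    star v ⬝ᵥ A *ᵥ v = ∑ k, (hA.eigenvalues k : ℂ) *
      Complex.normSq (((hA.eigenvectorUnitary : Matrix n n ℂ)ᴴ *ᵥ v) k) := by
  conv_lhs => rw [hA.spectral_theorem, Unitary.conjStarAlgAut_apply, star_eq_conjTranspose]
  exact star_dotProduct_mul_diagonal_mul_conjTranspose_mulVec _ _ v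

theorem IsHermitian.star_dotProduct_exp_smul_mulVec_eq_sum (c : ℂ) (v : n → ℂ) :
    star v ⬝ᵥ NormedSpace.exp (c • A) *ᵥ v = ∑ k, Complex.exp (c * hA.eigenvalues k) *
      Complex.normSq (((hA.eigenvectorUnitary : Matrix n n ℂ)ᴴ *ᵥ v) k) := by
  rw [hA.exp_smul]
  exact star_dotProduct_mul_diagonal_mul_conjTranspose_mulVec _ _ v

theorem IsHermitian.le_eigenvalues_of_le_rayleigh {E : ℝ}
    (hE : ∀ v : n → ℂ, E * (star v ⬝ᵥ v).re ≤ (star v ⬝ᵥ A *ᵥ v).re) (k : n) :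
    E ≤ hA.eigenvalues k := by
  have hb : star ⇑(hA.eigenvectorBasis k) ⬝ᵥ ⇑(hA.eigenvectorBasis k) = 1 := by
    rw [dotProduct_comm, ← EuclideanSpace.inner_eq_star_dotProduct,
      inner_self_eq_norm_sq_to_K, hA.eigenvectorBasis.orthonormal.1 k]
    simp
  have h := hE (hA.eigenvectorBasis k)
  rw [hb, Complex.one_re, mul_one] at h
  exact hA.eigenvalues_eq k ▸ h

theorem IsHermitian.norm_exp_mul_star_dotProduct_exp_mulVec_sub_le {E : ℝ}
    (hE : ∀ k, E ≤ hA.eigenvalues k) (t : ℝ) (v : n → ℂ) :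
    ‖Complex.exp (Complex.I * t * E) *
        (star v ⬝ᵥ NormedSpace.exp ((-(Complex.I * t)) • A) *ᵥ v) - star v ⬝ᵥ v‖ ≤
      |t| * (star v ⬝ᵥ A *ᵥ v - E * (star v ⬝ᵥ v)).re := by
  have hv := hA.star_dotProduct_exp_smul_mulVec_eq_sum 0 v
  simp only [zero_smul, NormedSpace.exp_zero, one_mulVec, zero_mul, Complex.exp_zero,
    one_mul] at hv
  rw [hA.star_dotProduct_exp_smul_mulVec_eq_sum, hA.star_dotProduct_mulVec_eq_sum, hv]
  set y := (hA.eigenvectorUnitary : Matrix n n ℂ)ᴴ *ᵥ v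
  have hterm : ∀ k, ‖Complex.exp (Complex.I * ↑(t * (E - hA.eigenvalues k))) - 1‖ ≤
      |t| * (hA.eigenvalues k - E) := by
    intro k
    refine Real.norm_exp_I_mul_ofReal_sub_one_le.trans_eq ?_
    rw [Real.norm_eq_abs, abs_mul, abs_of_nonpos (sub_nonpos.2 (hE k)), neg_sub]
  calc _ = ‖∑ k, (Complex.exp (Complex.I * ↑(t * (E - hA.eigenvalues k))) - 1) *
          Complex.normSq (y k)‖ := by
        rw [Finset.mul_sum, ← Finset.sum_sub_distrib]
        congr 1
        refine Finset.sum_congr rfl fun k _ => ?_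
        rw [sub_mul, one_mul, ← mul_assoc, ← Complex.exp_add]
        push_cast
        ring_nf
    _ ≤ ∑ k, |t| * (hA.eigenvalues k - E) * Complex.normSq (y k) := by
        refine (norm_sum_le _ _).trans (Finset.sum_le_sum fun k _ => ?_)
        rw [norm_mul, Complex.norm_real, Real.norm_of_nonneg (Complex.normSq_nonneg _)]
        exact mul_le_mul_of_nonneg_right (hterm k) (Complex.normSq_nonneg _)
    _ = _ := by
        rw [Finset.mul_sum, ← Finset.sum_sub_distrib]
        simp only [Complex.sub_re, Complex.re_sum, Complex.mul_re, Complex.ofReal_re,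
          Complex.ofReal_im, mul_zero, sub_zero]
        rw [Finset.mul_sum]
        refine Finset.sum_congr rfl fun k _ => ?_
        ring

end Hermitian

theorem IsHermitian.star_vecMul_eq_smul_star {A : Matrix n n ℂ} (hA : A.IsHermitian)
    {v : n → ℂ} {E : ℝ} (h : A *ᵥ v = (E : ℂ) • v) : star v ᵥ* A = (E : ℂ) • star v := by
  rw [← hA.eq, ← star_mulVec, h, star_smul, Complex.star_def, Complex.conj_ofReal]

theorem IsHermitian.star_dotProduct_exp_smul_mul_mulVec [DecidableEq n] {A : Matrix n n ℂ}
    (hA : A.IsHermitian) {v : n → ℂ} {E : ℝ} (h : A *ᵥ v = (E : ℂ) • v) (c : ℂ)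
    (B : Matrix n n ℂ) (w : n → ℂ) :
    star v ⬝ᵥ (NormedSpace.exp (c • A) * B) *ᵥ w = Complex.exp (c * E) * (star v ⬝ᵥ B *ᵥ w) := by
  have hrow : star v ᵥ* NormedSpace.exp (c • A) = Complex.exp (c * E) • star v := by
    rw [Complex.exp_eq_exp_ℂ]
    refine vecMul_exp_of_vecMul_eq_smul ?_
    rw [vecMul_smul, hA.star_vecMul_eq_smul_star h, smul_smul]
  rw [← mulVec_mulVec, dotProduct_mulVec, hrow, smul_dotProduct, smul_eq_mul]

theorem IsHermitian.star_dotProduct_mul_mul_mulVec {Φ : Matrix n n ℂ} (hΦ : Φ.IsHermitian)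
    (B : Matrix n n ℂ) (v : n → ℂ) :
    star v ⬝ᵥ (Φ * B * Φ) *ᵥ v = star (Φ *ᵥ v) ⬝ᵥ B *ᵥ (Φ *ᵥ v) := by
  rw [← mulVec_mulVec, ← mulVec_mulVec, dotProduct_mulVec, star_mulVec, hΦ.eq]

theorem star_dotProduct_commutator_commutator_mulVec {H Φ : Matrix n n ℂ} (hH : H.IsHermitian)
    (hΦ : Φ.IsHermitian) {ψ : n → ℂ} {E : ℝ} (hψ : H *ᵥ ψ = (E : ℂ) • ψ) :
    star ψ ⬝ᵥ (Φ * (H * Φ - Φ * H) - (H * Φ - Φ * H) * Φ) *ᵥ ψ =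
      2 * (star (Φ *ᵥ ψ) ⬝ᵥ H *ᵥ (Φ *ᵥ ψ) - E * (star (Φ *ᵥ ψ) ⬝ᵥ Φ *ᵥ ψ)) := by
  have hrow : star ψ ᵥ* Φ = star (Φ *ᵥ ψ) := by rw [star_mulVec, hΦ.eq]
  have hHrow := hH.star_vecMul_eq_smul_star hψ
  simp only [Matrix.mul_sub, Matrix.sub_mul, Matrix.sub_mulVec, dotProduct_sub,
    ← mulVec_mulVec, hψ, mulVec_smul, dotProduct_smul]
  simp only [dotProduct_mulVec (star ψ), hrow, hHrow, smul_dotProduct, smul_eq_mul]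
  ring

theorem norm_star_dotProduct_mulVec_le {𝕜 : Type*} [RCLike 𝕜] [DecidableEq n]
    (A : Matrix n n 𝕜) (v : n → 𝕜) :
    ‖star v ⬝ᵥ A *ᵥ v‖ ≤ ‖A‖ * RCLike.re (star v ⬝ᵥ v) := by
  have hv : RCLike.re (star v ⬝ᵥ v) = ‖WithLp.toLp 2 v‖ ^ 2 := by
    rw [← inner_self_eq_norm_sq (𝕜 := 𝕜), EuclideanSpace.inner_toLp_toLp, dotProduct_comm]
  calc ‖star v ⬝ᵥ A *ᵥ v‖ = ‖inner 𝕜 (WithLp.toLp 2 v) (WithLp.toLp 2 (A *ᵥ v))‖ := by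
        rw [EuclideanSpace.inner_toLp_toLp, dotProduct_comm]
    _ ≤ ‖WithLp.toLp 2 v‖ * ‖WithLp.toLp 2 (A *ᵥ v)‖ := norm_inner_le_norm _ _
    _ ≤ ‖WithLp.toLp 2 v‖ * (‖A‖ * ‖WithLp.toLp 2 v‖) := by
        gcongr
        exact A.l2_opNorm_mulVec (WithLp.toLp 2 v)
    _ = ‖A‖ * RCLike.re (star v ⬝ᵥ v) := by rw [hv]; ring

end Matrix

/-- Watanabe–Oshikawa estimate: for a finite-dimensional Hamiltonian `H` with
ground state `ψ₀` (of ground-state energy `E₀`, the minimum of the spectrum) and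
any self-adjoint `Φ`, for all `t ≥ 0`,
`|⟨0|Φ(t)Φ(0)|0⟩ − ⟨0|Φ(0)²|0⟩| ≤ (t/2)·‖[Φ,[H,Φ]]‖`,
where `Φ(t) = e^{iHt} Φ e^{−iHt}`. -/
theorem watanabe_oshikawa_bound (n : ℕ) (H Φ : Matrix (Fin n) (Fin n) ℂ)
    (hH : H.IsHermitian) (hΦ : Φ.IsHermitian)
    (ψ₀ : Fin n → ℂ) (E₀ : ℝ)
    (hnorm : star ψ₀ ⬝ᵥ ψ₀ = 1)
    (hground : H.mulVec ψ₀ = (E₀ : ℂ) • ψ₀)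
    (hmin : ∀ v : Fin n → ℂ, E₀ * (star v ⬝ᵥ v).re ≤ (star v ⬝ᵥ H.mulVec v).re)
    (t : ℝ) (ht : 0 ≤ t) :
    ‖((star ψ₀ ⬝ᵥ (NormedSpace.exp ((Complex.I * t) • H) * Φ *
            NormedSpace.exp ((-(Complex.I * t)) • H) * Φ).mulVec ψ₀) -
          (star ψ₀ ⬝ᵥ (Φ * Φ).mulVec ψ₀))‖ ≤
      t / 2 * ‖Φ * (H * Φ - Φ * H) - (H * Φ - Φ * H) * Φ‖ := by
  set φ := Φ *ᵥ ψ₀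
  have hcorr : star ψ₀ ⬝ᵥ (NormedSpace.exp ((Complex.I * t) • H) * Φ *
      NormedSpace.exp ((-(Complex.I * t)) • H) * Φ) *ᵥ ψ₀ = Complex.exp (Complex.I * t * E₀) *
        (star φ ⬝ᵥ NormedSpace.exp ((-(Complex.I * t)) • H) *ᵥ φ) := by
    rw [Matrix.mul_assoc, Matrix.mul_assoc, hH.star_dotProduct_exp_smul_mul_mulVec hground,
      ← Matrix.mul_assoc, hΦ.star_dotProduct_mul_mul_mulVec]
  have hsq : star ψ₀ ⬝ᵥ (Φ * Φ) *ᵥ ψ₀ = star φ ⬝ᵥ φ := by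
    simpa using hΦ.star_dotProduct_mul_mul_mulVec 1 ψ₀
  set C := Φ * (H * Φ - Φ * H) - (H * Φ - Φ * H) * Φ
  have hC : (star ψ₀ ⬝ᵥ C *ᵥ ψ₀).re ≤ ‖C‖ := by
    simpa [hnorm] using (Complex.re_le_norm _).trans (norm_star_dotProduct_mulVec_le C ψ₀)
  rw [star_dotProduct_commutator_commutator_mulVec hH hΦ hground] at hC
  calc _ ≤ |t| * (star φ ⬝ᵥ H *ᵥ φ - E₀ * (star φ ⬝ᵥ φ)).re := by
        rw [hcorr, hsq]
        exact hH.norm_exp_mul_star_dotProduct_exp_mulVec_sub_le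
          (hH.le_eigenvalues_of_le_rayleigh hmin) t _
    _ = t / 2 * (2 * (star φ ⬝ᵥ H *ᵥ φ - E₀ * (star φ ⬝ᵥ φ))).re := by
        rw [abs_of_nonneg ht, Complex.mul_re, Complex.re_ofNat, Complex.im_ofNat, zero_mul,
          sub_zero]
        ring
    _ ≤ t / 2 * ‖C‖ := by gcongr
end
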